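/- arXiv:0907.3863 — 5 statements merged into one kernel-verified Lean document; each statement's English description precedes it below -/
import Mathlib

section
/- For 0 < q < 1, the bounded operators a and b on ℓ²(ℕ × ℤ, ℂ) defined on the canonical orthonormal basis by a ξ_{n,k} = √(1 − q^{2n}) ξ_{n−1,k} and b ξ_{n,k} = q^n ξ_{n,k+1} satisfy the defining relations of the quantum group SU_q(2): a* a + b* b = 1, a a* + q² b b* = 1, a b = q · b a, a* b = q⁻¹ · b a*, and b b* = b* b. -/
/-!
Every operator involved is a weighted shift on the basis `ξ_{n,k}`: `a` and `b` by hypothesis,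
and `a*`, `b*` because the adjoint of a weighted shift is the shift in the opposite direction with
conjugated weights. Each relation therefore only has to be checked on basis vectors, where it
becomes an identity between weights, e.g. `(1 - q^{2n}) + q^{2n} = 1` for `a* a + b* b = 1`.
-/

noncomputable section

/-- The Hilbert space `ℓ²(ℕ × ℤ, ℂ)`. -/
abbrev H : Type := lp (fun _ : ℕ × ℤ => ℂ) 2

/-- The canonical orthonormal basis vector `ξ_{n,k}` of `ℓ²(ℕ × ℤ, ℂ)`.
(The convention `ξ_{n,k} = 0` for `n < 0` is realized via truncated subtraction
on `ℕ` together with the vanishing coefficient `√(1 - q⁰) = 0`.) -/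
def ξ (p : ℕ × ℤ) : H := lp.single 2 p 1

open scoped InnerProductSpace

open ContinuousLinearMap

namespace lp

variable {ι 𝕜 : Type*} [RCLike 𝕜] [DecidableEq ι]

theorem inner_single_one_left (i : ι) (f : ℓ²(ι, 𝕜)) : ⟪lp.single 2 i (1 : 𝕜), f⟫_𝕜 = f i := by
  simp [inner_single_left]

theorem ext_continuousLinearMap_single_one {F : Type*} [AddCommMonoid F] [Module 𝕜 F]
    [TopologicalSpace F] [T2Space F] {T S : ℓ²(ι, 𝕜) →L[𝕜] F}
    (h : ∀ i, T (lp.single 2 i 1) = S (lp.single 2 i 1)) : T = S :=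
  ext_continuousLinearMap ENNReal.ofNat_ne_top fun i => ext_ring (by simpa using h i)

-- `τ` need only invert `σ` off the zeros of `c`, as for the truncated shift `n ↦ n - 1`.
theorem adjoint_apply_single_one {T : ℓ²(ι, 𝕜) →L[𝕜] ℓ²(ι, 𝕜)} {c : ι → 𝕜} {σ τ : ι → ι}
    (hT : ∀ i, T (lp.single 2 i 1) = c i • lp.single 2 (σ i) 1)
    (hστ : ∀ i j, c i ≠ 0 → (σ i = j ↔ τ j = i)) (j : ι) :
    adjoint T (lp.single 2 j 1) = starRingEnd 𝕜 (c (τ j)) • lp.single 2 (τ j) 1 := by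
  ext i
  rw [← inner_single_one_left, adjoint_inner_right, hT, inner_smul_left, inner_single_one_left,
    lp.coeFn_smul, Pi.smul_apply, smul_eq_mul]
  by_cases hτ : τ j = i
  · subst hτ
    by_cases hc : c (τ j) = 0
    · simp [hc]
    · simp [(hστ _ j hc).mpr rfl]
  · by_cases hc : c i = 0
    · simp [hc, Ne.symm hτ]
    · simp [Ne.symm hτ, Pi.single_eq_of_ne (mt (hστ i j hc).mp hτ)]

end lp

namespace SUq2

variable {q : ℝ} {a b : H →L[ℂ] H}

theorem ext_ξ {T S : H →L[ℂ] H} (h : ∀ (n : ℕ) (k : ℤ), T (ξ (n, k)) = S (ξ (n, k))) : T = S :=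
  lp.ext_continuousLinearMap_single_one fun p => h p.1 p.2

theorem ofReal_sqrt_one_sub_pow_mul_self (hq : |q| ≤ 1) (n : ℕ) :
    (Real.sqrt (1 - q ^ (2 * n)) : ℂ) * Real.sqrt (1 - q ^ (2 * n)) = 1 - (q : ℂ) ^ (2 * n) := by
  have hpow : q ^ (2 * n) ≤ 1 := by
    rw [pow_mul]
    exact pow_le_one₀ (sq_nonneg q) (sq_le_one_iff_abs_le_one q |>.mpr hq)
  rw [← Complex.ofReal_mul, Real.mul_self_sqrt (by linarith)]
  push_cast
  rfl

variable (ha : ∀ (n : ℕ) (k : ℤ), a (ξ (n, k)) = (Real.sqrt (1 - q ^ (2 * n)) : ℂ) • ξ (n - 1, k))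
  (hb : ∀ (n : ℕ) (k : ℤ), b (ξ (n, k)) = ((q ^ n : ℝ) : ℂ) • ξ (n, k + 1))

include ha in
theorem adjoint_a_apply (n : ℕ) (k : ℤ) :
    adjoint a (ξ (n, k)) = (Real.sqrt (1 - q ^ (2 * (n + 1))) : ℂ) • ξ (n + 1, k) := by
  refine (lp.adjoint_apply_single_one (σ := fun p => (p.1 - 1, p.2)) (τ := fun p => (p.1 + 1, p.2))
    (fun p => ha p.1 p.2) ?_ (n, k)).trans (by simp [ξ])
  rintro ⟨_ | m, l⟩ ⟨n, k⟩ hc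
  · simp at hc
  · simp [eq_comm]

include hb in
theorem adjoint_b_apply (n : ℕ) (k : ℤ) :
    adjoint b (ξ (n, k)) = ((q ^ n : ℝ) : ℂ) • ξ (n, k - 1) := by
  refine (lp.adjoint_apply_single_one (σ := fun p => (p.1, p.2 + 1)) (τ := fun p => (p.1, p.2 - 1))
    (fun p => hb p.1 p.2) ?_ (n, k)).trans (by simp [ξ])
  rintro ⟨m, l⟩ ⟨n, k⟩ -
  simp only [Prod.mk.injEq]
  omega

include hb in
theorem b_mul_adjoint_b : b * adjoint b = adjoint b * b := by
  refine ext_ξ fun n k => ?_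
  simp only [mul_apply_eq_comp, hb, adjoint_b_apply hb, map_smul, smul_smul, add_sub_cancel_right,
    sub_add_cancel]

include ha hb

theorem adjoint_a_mul_a_add_adjoint_b_mul_b (hq : |q| ≤ 1) : adjoint a * a + adjoint b * b = 1 := by
  refine ext_ξ fun n k => ?_
  simp only [add_apply, mul_apply_eq_comp, one_apply_eq_self, ha, hb, map_smul, adjoint_a_apply ha,
    adjoint_b_apply hb, smul_smul]
  rcases n with _ | n
  · simp
  · simp only [Nat.add_sub_cancel, add_sub_cancel_right, ofReal_sqrt_one_sub_pow_mul_self hq,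
      ← add_smul]
    convert one_smul ℂ (ξ (n + 1, k))
    push_cast
    ring

theorem a_mul_adjoint_a_add_sq_smul_b_mul_adjoint_b (hq : |q| ≤ 1) :
    a * adjoint a + ((q : ℂ) ^ 2) • (b * adjoint b) = 1 := by
  refine ext_ξ fun n k => ?_
  simp only [add_apply, smul_apply, mul_apply_eq_comp, one_apply_eq_self, ha, hb, map_smul,
    adjoint_a_apply ha, adjoint_b_apply hb, smul_smul, ← add_smul, Nat.add_sub_cancel,
    sub_add_cancel, ofReal_sqrt_one_sub_pow_mul_self hq]
  convert one_smul ℂ (ξ (n, k))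
  push_cast
  ring

theorem a_mul_b : a * b = (q : ℂ) • (b * a) := by
  refine ext_ξ fun n k => ?_
  simp only [smul_apply, mul_apply_eq_comp, ha, hb, map_smul, smul_smul]
  rcases n with _ | n
  · simp
  · simp only [Nat.add_sub_cancel]
    congr 1
    push_cast
    ring

theorem adjoint_a_mul_b (hq : q ≠ 0) : adjoint a * b = (q : ℂ)⁻¹ • (b * adjoint a) := by
  refine ext_ξ fun n k => ?_
  simp only [smul_apply, mul_apply_eq_comp, hb, adjoint_a_apply ha, map_smul, smul_smul]
  have hq' : (q : ℂ) ≠ 0 := Complex.ofReal_ne_zero.mpr hq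
  congr 1
  push_cast
  field_simp
  ring

end SUq2

open ContinuousLinearMap in
theorem stmt_2 (q : ℝ) (hq0 : 0 < q) (hq1 : q < 1)
    (a b : H →L[ℂ] H)
    (ha : ∀ (n : ℕ) (k : ℤ),
      a (ξ (n, k)) = (Real.sqrt (1 - q ^ (2 * n)) : ℂ) • ξ (n - 1, k))
    (hb : ∀ (n : ℕ) (k : ℤ), b (ξ (n, k)) = ((q ^ n : ℝ) : ℂ) • ξ (n, k + 1)) :
    adjoint a * a + adjoint b * b = 1 ∧
    a * adjoint a + ((q : ℂ) ^ 2) • (b * adjoint b) = 1 ∧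
    a * b = (q : ℂ) • (b * a) ∧
    adjoint a * b = ((q : ℂ)⁻¹) • (b * adjoint a) ∧
    b * adjoint b = adjoint b * b := by
  have hq : |q| ≤ 1 := abs_le.mpr ⟨by linarith, hq1.le⟩
  exact ⟨SUq2.adjoint_a_mul_a_add_adjoint_b_mul_b ha hb hq,
    SUq2.a_mul_adjoint_a_add_sq_smul_b_mul_adjoint_b ha hb hq, SUq2.a_mul_b ha hb,
    SUq2.adjoint_a_mul_b ha hb hq0.ne', SUq2.b_mul_adjoint_b hb⟩

end
end

section
/- For 0 < q < 1 and every i ∈ ℕ, the diagonal projection e_{ii} ⊗ 1 (the bounded operator on ℓ²(ℕ × ℤ, ℂ) sending ξ_{n,k} to δ_{i,n} ξ_{i,k}) belongs to the double centralizer (bicommutant) of the set {b, b*} inside the ring of bounded operators on ℓ²(ℕ × ℤ, ℂ), where b is the operator determined by b ξ_{n,k} = q^n ξ_{n,k+1}. -/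
/-!
The operator `b* b` is diagonal in the basis `ξ`, with eigenvalue `q ^ (2 n)` on `ξ (n, k)`, and
since `0 < q < 1` these eigenvalues separate the rows `n`. An operator `T` commuting with `b` and
`b*` commutes with `b* b`, so it maps `ξ (n, k)` into the eigenspace of `q ^ (2 n)`, which is the
closed span of row `n`. The projection `P` is diagonal as well and acts on row `n` as the scalar
`δ_{i n}`, hence `P T = T P`.
-/

noncomputable section

section Diagonal

open ContinuousLinearMap

variable {ι 𝕜 : Type*} [RCLike 𝕜] [DecidableEq ι]

theorem lp.ext_single {F : Type*} [AddCommMonoid F] [Module 𝕜 F] [TopologicalSpace F] [T2Space F]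
    {S T : lp (fun _ : ι => 𝕜) 2 →L[𝕜] F}
    (h : ∀ p, S (lp.single 2 p 1) = T (lp.single 2 p 1)) : S = T :=
  lp.ext_continuousLinearMap ENNReal.ofNat_ne_top fun p => ext_ring (h p)

def IsDiagonal (D : lp (fun _ : ι => 𝕜) 2 →L[𝕜] lp (fun _ : ι => 𝕜) 2) (μ : ι → 𝕜) : Prop :=
  ∀ p, D (lp.single 2 p 1) = μ p • lp.single 2 p 1

variable {D D' T : lp (fun _ : ι => 𝕜) 2 →L[𝕜] lp (fun _ : ι => 𝕜) 2} {μ ν : ι → 𝕜}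

theorem IsDiagonal.apply_apply (hD : IsDiagonal D μ) (v : lp (fun _ : ι => 𝕜) 2) (p : ι) :
    D v p = μ p * v p := by
  have h : (lp.evalCLM 𝕜 _ 2 p).comp D = μ p • lp.evalCLM 𝕜 _ 2 p := by
    refine lp.ext_single fun r => ?_
    by_cases hr : r = p
    · subst hr
      simp [hD r, lp.evalCLM]
    · simp [hD r, lp.evalCLM, Pi.single_eq_of_ne (Ne.symm hr)]
  simpa [lp.evalCLM] using congr($h v)

theorem IsDiagonal.commute_of_factor (hD : IsDiagonal D μ) (hD' : IsDiagonal D' ν)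
    (hνμ : ∀ p r, μ p = μ r → ν p = ν r) (hT : Commute D T) : Commute D' T := by
  refine lp.ext_single fun r => ?_
  set v := T (lp.single 2 r 1)
  have hv : ∀ p, μ p * v p = μ r * v p := fun p => by
    simpa [hD.apply_apply, hD r] using congr($(hT.eq) (lp.single 2 r 1) p)
  ext p
  change D' v p = T (D' (lp.single 2 r 1)) p
  rw [hD' r, map_smul, lp.coeFn_smul, Pi.smul_apply, smul_eq_mul, hD'.apply_apply]
  change ν p * v p = ν r * v p
  by_cases hvp : v p = 0
  · rw [hvp, mul_zero, mul_zero]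
  · rw [hνμ p r (mul_right_cancel₀ hvp (hv p))]

variable {b : lp (fun _ : ι => 𝕜) 2 →L[𝕜] lp (fun _ : ι => 𝕜) 2} {σ : ι → ι} {c : ι → 𝕜}

theorem adjoint_apply_single_of_weightedShift (hσ : σ.Injective)
    (hb : ∀ p, b (lp.single 2 p 1) = c p • lp.single 2 (σ p) 1) (p : ι) :
    adjoint b (lp.single 2 (σ p) 1) = starRingEnd 𝕜 (c p) • lp.single 2 p 1 := by
  ext r
  have h := lp.inner_single_left (𝕜 := 𝕜) r (1 : 𝕜) (adjoint b (lp.single 2 (σ p) 1))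
  rw [adjoint_inner_right, hb, inner_smul_left, lp.inner_single_left] at h
  by_cases hr : r = p
  · subst hr
    simpa using h.symm
  · simpa [Pi.single_eq_of_ne (hσ.ne hr), Pi.single_eq_of_ne hr] using h.symm

theorem isDiagonal_adjoint_mul_self_of_weightedShift (hσ : σ.Injective)
    (hb : ∀ p, b (lp.single 2 p 1) = c p • lp.single 2 (σ p) 1) :
    IsDiagonal (adjoint b * b) fun p => starRingEnd 𝕜 (c p) * c p := fun p => by
  rw [mul_apply_eq_comp, hb, map_smul, adjoint_apply_single_of_weightedShift hσ hb, smul_smul,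
    mul_comm]

end Diagonal

open ContinuousLinearMap in
/-- The diagonal projection `e_{ii} ⊗ 1` lies in the double centralizer
(bicommutant) of `{b, b*}` in `B(ℓ²(ℕ × ℤ))`. -/
theorem stmt_5 (q : ℝ) (hq0 : 0 < q) (hq1 : q < 1)
    (b : H →L[ℂ] H)
    (hb : ∀ (n : ℕ) (k : ℤ), b (ξ (n, k)) = ((q ^ n : ℝ) : ℂ) • ξ (n, k + 1))
    (i : ℕ) (P : H →L[ℂ] H)
    (hP : ∀ (n : ℕ) (k : ℤ), P (ξ (n, k)) = if i = n then ξ (i, k) else 0) :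
    P ∈ Set.centralizer (Set.centralizer {b, adjoint b}) := by
  have hσ : Function.Injective fun p : ℕ × ℤ => (p.1, p.2 + 1) := fun p r h => by
    simpa [Prod.ext_iff] using h
  have hA := isDiagonal_adjoint_mul_self_of_weightedShift hσ
    (c := fun p => ((q ^ p.1 : ℝ) : ℂ)) fun p => hb p.1 p.2
  have hPdiag : IsDiagonal P fun p => if i = p.1 then 1 else 0 := fun ⟨n, k⟩ => by
    rw [← ξ, hP]
    split_ifs with h <;> simp [h]
  intro T hT
  have hTb : Commute b T := hT b (by simp)
  have hTb' : Commute (adjoint b) T := hT (adjoint b) (by simp)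
  refine (hA.commute_of_factor hPdiag ?_ (hTb'.mul_left hTb)).eq.symm
  rintro ⟨m, l⟩ ⟨n, k⟩ h
  have hsq : q ^ (m + m) = q ^ (n + n) := by
    simp only [Complex.conj_ofReal] at h
    rw [pow_add, pow_add]
    exact_mod_cast h
  obtain rfl : m = n := by
    have := (pow_right_strictAnti₀ hq0 hq1).injective hsq
    omega
  rfl

end
end

section
/- For 0 < q < 1, for all i, j ∈ ℕ and all n ∈ ℤ, the operator e_{ij} ⊗ S^n (the bounded operator on ℓ²(ℕ × ℤ, ℂ) sending ξ_{m,k} to δ_{j,m} ξ_{i,k+n}) belongs to the double centralizer (bicommutant) of the set {a, a*, b, b*} inside the ring of bounded operators on ℓ²(ℕ × ℤ, ℂ), where a and b are the operators determined by a ξ_{n,k} = √(1 − q^{2n}) ξ_{n−1,k} and b ξ_{n,k} = q^n ξ_{n,k+1}. -/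
/-!
If `S` commutes with `a`, `b` and `b*`, its matrix `⟨ξ_{p,l}, S ξ_{m,k}⟩` vanishes off `p = m`
(`S` commutes with `b*b`, which is diagonal with the distinct eigenvalues `q^{2m}`), is invariant
under `(l, k) ↦ (l + 1, k + 1)` (commutation with `b`) and does not depend on `p` (commutation
with `a`, whose weights `√(1 - q^{2(p+1)})` never vanish). Hence it equals `δ_{pm} c(l - k)`, and
such a matrix commutes with every `e_{ij} ⊗ S^n`.
-/

noncomputable section

open ContinuousLinearMap ComplexConjugate

lemma ξ_apply (r s : ℕ × ℤ) : ξ r s = if s = r then 1 else 0 := by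
  simp [ξ, lp.single_apply, Pi.single_apply]

lemma inner_ξ_left (r : ℕ × ℤ) (v : H) : inner ℂ (ξ r) v = v r := by
  simp [ξ, lp.inner_single_left]

lemma ext_ξ {A B : H →L[ℂ] H} (h : ∀ r s, A (ξ s) r = B (ξ s) r) : A = B :=
  lp.ext_continuousLinearMap ENNReal.ofNat_ne_top fun s =>
    ext_ring <| lp.ext <| funext fun r => h r s

lemma apply_apply_eq_inner_adjoint_ξ (A : H →L[ℂ] H) (v : H) (r : ℕ × ℤ) :
    A v r = inner ℂ (adjoint A (ξ r)) v := by
  rw [adjoint_inner_left, inner_ξ_left]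

lemma adjoint_apply_ξ_eq {A : H →L[ℂ] H} {s : ℕ × ℤ} {v : H}
    (h : ∀ r, v r = conj (A (ξ r) s)) : adjoint A (ξ s) = v := by
  refine lp.ext <| funext fun r => ?_
  rw [h, ← inner_ξ_left, adjoint_inner_right, ← inner_conj_symm, inner_ξ_left]

lemma Commute.conj_mul_apply_ξ_apply_eq {A S : H →L[ℂ] H} (hAS : Commute A S)
    {r r' s s' : ℕ × ℤ} {μ ν : ℂ} (hr : adjoint A (ξ r) = μ • ξ r') (hs : A (ξ s) = ν • ξ s') :
    conj μ * S (ξ s) r' = ν * S (ξ s') r := by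
  rw [← inner_ξ_left, ← inner_smul_left, ← hr, ← apply_apply_eq_inner_adjoint_ξ,
    ← mul_apply_eq_comp, hAS.eq, mul_apply_eq_comp, hs, map_smul]
  rfl

lemma Commute.apply_ξ_apply_eq_zero {D S : H →L[ℂ] H} (hDS : Commute D S) {d : ℕ × ℤ → ℂ}
    (hD : ∀ r, D (ξ r) = d r • ξ r) {r s : ℕ × ℤ} (hrs : d r ≠ d s) : S (ξ s) r = 0 := by
  have hD' : adjoint D (ξ r) = conj (d r) • ξ r := adjoint_apply_ξ_eq fun t => by
    by_cases h : t = r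
    · simp [h, hD, ξ_apply]
    · simp [h, Ne.symm h, hD, ξ_apply]
  have h := hDS.conj_mul_apply_ξ_apply_eq hD' (hD s)
  rw [Complex.conj_conj] at h
  have h0 : (d r - d s) * S (ξ s) r = 0 := by rw [sub_mul, h, sub_self]
  exact (mul_eq_zero.mp h0).resolve_left (sub_ne_zero.mpr hrs)

lemma adjoint_b_apply_ξ {q : ℝ} {b : H →L[ℂ] H}
    (hb : ∀ (n : ℕ) (k : ℤ), b (ξ (n, k)) = ((q ^ n : ℝ) : ℂ) • ξ (n, k + 1)) (p : ℕ) (l : ℤ) :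
    adjoint b (ξ (p, l)) = ((q ^ p : ℝ) : ℂ) • ξ (p, l - 1) := by
  refine adjoint_apply_ξ_eq fun ⟨m, k⟩ => ?_
  simp only [hb, lp.coeFn_smul, Pi.smul_apply, ξ_apply, smul_eq_mul, Prod.mk.injEq, map_mul,
    Complex.conj_ofReal]
  by_cases h : m = p ∧ k = l - 1
  · obtain ⟨rfl, rfl⟩ := h
    simp
  · rw [if_neg h, if_neg (by omega)]
    simp

lemma adjoint_a_apply_ξ {q : ℝ} {a : H →L[ℂ] H}
    (ha : ∀ (n : ℕ) (k : ℤ), a (ξ (n, k)) = (Real.sqrt (1 - q ^ (2 * n)) : ℂ) • ξ (n - 1, k))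
    (p : ℕ) (l : ℤ) :
    adjoint a (ξ (p, l)) = (Real.sqrt (1 - q ^ (2 * (p + 1))) : ℂ) • ξ (p + 1, l) := by
  refine adjoint_apply_ξ_eq fun ⟨m, k⟩ => ?_
  simp only [ha, lp.coeFn_smul, Pi.smul_apply, ξ_apply, smul_eq_mul, Prod.mk.injEq, map_mul,
    Complex.conj_ofReal]
  by_cases h : m = p + 1 ∧ k = l
  · obtain ⟨rfl, rfl⟩ := h
    simp
  · rw [if_neg h]
    rcases m with _ | m
    · -- `ξ_{0-1,k}` is `ξ_{0,k}` by truncated subtraction, but its weight `√(1 - q⁰)` is zero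
      simp
    · rw [if_neg (by omega)]
      simp

lemma adjoint_T_apply_ξ {i j : ℕ} {n : ℤ} {T : H →L[ℂ] H}
    (hT : ∀ (m : ℕ) (k : ℤ), T (ξ (m, k)) = if j = m then ξ (i, k + n) else 0) (p : ℕ) (l : ℤ) :
    adjoint T (ξ (p, l)) = if p = i then ξ (j, l - n) else 0 := by
  refine adjoint_apply_ξ_eq fun ⟨m, k⟩ => ?_
  rw [hT]
  by_cases hpi : p = i <;> by_cases hjm : j = m <;> simp [hpi, hjm, ξ_apply, Prod.ext_iff] <;>
    grind

section Commutant

variable {q : ℝ} {a b S : H →L[ℂ] H}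

lemma adjoint_b_mul_b_apply_ξ
    (hb : ∀ (n : ℕ) (k : ℤ), b (ξ (n, k)) = ((q ^ n : ℝ) : ℂ) • ξ (n, k + 1)) (r : ℕ × ℤ) :
    (adjoint b * b) (ξ r) = ((q ^ (2 * r.1) : ℝ) : ℂ) • ξ r := by
  rw [mul_apply_eq_comp, hb, map_smul, adjoint_b_apply_ξ hb, add_sub_cancel_right, smul_smul,
    ← Complex.ofReal_mul, ← pow_add, two_mul]

lemma apply_ξ_apply_eq_zero_of_ne (hq0 : 0 < q) (hq1 : q < 1)
    (hb : ∀ (n : ℕ) (k : ℤ), b (ξ (n, k)) = ((q ^ n : ℝ) : ℂ) • ξ (n, k + 1))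
    (hSb : Commute b S) (hSb' : Commute (adjoint b) S) ⦃p m : ℕ⦄ (hpm : p ≠ m) (l k : ℤ) :
    S (ξ (m, k)) (p, l) = 0 :=
  (hSb'.mul_left hSb).apply_ξ_apply_eq_zero (adjoint_b_mul_b_apply_ξ hb) fun h =>
    hpm <| by simpa using (pow_right_injective₀ hq0 hq1.ne).eq_iff.mp (Complex.ofReal_injective h)

lemma apply_ξ_apply_add_one (hq0 : 0 < q)
    (hb : ∀ (n : ℕ) (k : ℤ), b (ξ (n, k)) = ((q ^ n : ℝ) : ℂ) • ξ (n, k + 1))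
    (hSb : Commute b S) (p : ℕ) (l k : ℤ) :
    S (ξ (p, k + 1)) (p, l + 1) = S (ξ (p, k)) (p, l) := by
  have h := hSb.conj_mul_apply_ξ_apply_eq (adjoint_b_apply_ξ hb p (l + 1)) (hb p k)
  rw [add_sub_cancel_right, Complex.conj_ofReal] at h
  exact (mul_left_cancel₀ (by exact_mod_cast (pow_pos hq0 p).ne') h).symm

lemma apply_ξ_apply_succ (hq0 : 0 < q) (hq1 : q < 1)
    (ha : ∀ (n : ℕ) (k : ℤ), a (ξ (n, k)) = (Real.sqrt (1 - q ^ (2 * n)) : ℂ) • ξ (n - 1, k))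
    (hSa : Commute a S) (p : ℕ) (l k : ℤ) :
    S (ξ (p + 1, k)) (p + 1, l) = S (ξ (p, k)) (p, l) := by
  have h := hSa.conj_mul_apply_ξ_apply_eq (adjoint_a_apply_ξ ha p l) (ha (p + 1) k)
  rw [Complex.conj_ofReal, Nat.add_sub_cancel] at h
  have hq : q ^ (2 * (p + 1)) < 1 := pow_lt_one₀ hq0.le hq1 (by omega)
  exact mul_left_cancel₀ (Complex.ofReal_ne_zero.mpr (Real.sqrt_ne_zero'.mpr (by linarith))) h

lemma apply_ξ_apply_self (hq0 : 0 < q) (hq1 : q < 1)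
    (ha : ∀ (n : ℕ) (k : ℤ), a (ξ (n, k)) = (Real.sqrt (1 - q ^ (2 * n)) : ℂ) • ξ (n - 1, k))
    (hb : ∀ (n : ℕ) (k : ℤ), b (ξ (n, k)) = ((q ^ n : ℝ) : ℂ) • ξ (n, k + 1))
    (hSa : Commute a S) (hSb : Commute b S) (p : ℕ) (l k : ℤ) :
    S (ξ (p, k)) (p, l) = S (ξ (0, 0)) (0, l - k) := by
  have h_level : S (ξ (p, k)) (p, l) = S (ξ (0, k)) (0, l) := by
    induction p with
    | zero => rfl
    | succ p ih => rw [apply_ξ_apply_succ hq0 hq1 ha hSa, ih]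
  have h_periodic : Function.Periodic (fun t : ℤ => S (ξ (0, t)) (0, l - k + t)) 1 := fun t => by
    simp only [← add_assoc, apply_ξ_apply_add_one hq0 hb hSb]
  have h_shift := h_periodic.int_mul_eq k
  simp only [Int.cast_id, mul_one, sub_add_cancel, add_zero] at h_shift
  rw [h_level, h_shift]

end Commutant

open ContinuousLinearMap in
/-- Every `e_{ij} ⊗ S^n` (determined by `(e_{ij} ⊗ S^n) ξ_{m,k} = δ_{j,m} ξ_{i,k+n}`)
lies in the double centralizer (bicommutant) of `{a, a*, b, b*}`. -/
theorem stmt_7 (q : ℝ) (hq0 : 0 < q) (hq1 : q < 1)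
    (a b : H →L[ℂ] H)
    (ha : ∀ (n : ℕ) (k : ℤ),
      a (ξ (n, k)) = (Real.sqrt (1 - q ^ (2 * n)) : ℂ) • ξ (n - 1, k))
    (hb : ∀ (n : ℕ) (k : ℤ), b (ξ (n, k)) = ((q ^ n : ℝ) : ℂ) • ξ (n, k + 1))
    (i j : ℕ) (n : ℤ) (T : H →L[ℂ] H)
    (hT : ∀ (m : ℕ) (k : ℤ), T (ξ (m, k)) = if j = m then ξ (i, k + n) else 0) :
    T ∈ Set.centralizer (Set.centralizer {a, adjoint a, b, adjoint b}) := by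
  refine Set.mem_centralizer_iff.mpr fun S hS => ?_
  have hSa : Commute a S := hS a (by simp)
  have hSb : Commute b S := hS b (by simp)
  have hS_diag := apply_ξ_apply_self hq0 hq1 ha hb hSa hSb
  have hS_off_diag := apply_ξ_apply_eq_zero_of_ne hq0 hq1 hb hSb (hS (adjoint b) (by simp))
  refine ext_ξ fun ⟨p, l⟩ ⟨m, k⟩ => ?_
  rw [mul_apply_eq_comp, mul_apply_eq_comp, hT, apply_apply_eq_inner_adjoint_ξ T,
    adjoint_T_apply_ξ hT]
  by_cases hjm : j = m
  · subst hjm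
    by_cases hpi : p = i
    · subst hpi
      rw [if_pos rfl, if_pos rfl, inner_ξ_left, hS_diag p l, hS_diag j (l - n), sub_sub, add_comm k]
    · rw [if_pos rfl, if_neg hpi, inner_zero_left, hS_off_diag hpi]
  · rw [if_neg hjm, map_zero]
    split_ifs
    · rw [inner_ξ_left, hS_off_diag hjm, lp.coeFn_zero, Pi.zero_apply]
    · rw [inner_zero_left, lp.coeFn_zero, Pi.zero_apply]

end
end

section
/- Let A be a unital complex *-algebra with a linear functional φ : A → ℂ. Let B ⊆ A be a unital *-subalgebra, and let d ∈ B be a unitary element (d* d = d d* = 1) lying in the center of B, such that φ(d) = φ(d*) = 0. Let u ∈ A be a Haar unitary which is *-free from B with respect to φ. Then ud is a Haar unitary which is *-free from B with respect to φ; that is, (ud)*(ud) = (ud)(ud)* = 1, φ((ud)^n) = 0 and φ(((ud)*)^n) = 0 for every integer n ≥ 1, and the unital *-subalgebra generated by ud is free from B with respect to φ. -/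
noncomputable section

/-- Two subsets `A₁, A₂` of a unital complex algebra are *free* with respect to a
linear functional `φ` if `φ(x₁ x₂ ⋯ x_k) = 0` whenever every `x_i` is centered
(`φ(x_i) = 0`), each `x_i` belongs to `A₁` or `A₂`, and consecutive `x_i`
belong to different ones of the two (alternation). -/
def IsFreePair {A : Type*} [Ring A] [Algebra ℂ A]
    (φ : A →ₗ[ℂ] ℂ) (A₁ A₂ : Set A) : Prop :=
  ∀ (k : ℕ) (x : Fin (k + 1) → A) (f : Fin (k + 1) → Bool),
    (∀ i, x i ∈ (if f i then A₁ else A₂)) →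
    (∀ i, φ (x i) = 0) →
    (∀ i : Fin k, f i.castSucc ≠ f i.succ) →
    φ (List.ofFn x).prod = 0

/-- A *Haar unitary* with respect to `φ`: a unitary `u` with
`φ(uⁿ) = φ((u*)ⁿ) = 0` for all `n ≥ 1`. -/
def IsHaarUnitary {A : Type*} [Ring A] [StarRing A] [Algebra ℂ A]
    (φ : A →ₗ[ℂ] ℂ) (u : A) : Prop :=
  star u * u = 1 ∧ u * star u = 1 ∧
    ∀ n : ℕ, 1 ≤ n → φ (u ^ n) = 0 ∧ φ ((star u) ^ n) = 0

/-!
Write `(u d)ⁿ = u d u d ⋯ u d` and `(u d)⁻ⁿ = d* u* ⋯ d* u*`. In an alternating product of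
centered elements of the *-algebra generated by `u d` and of `B`, a junction `u d · b · d* u*`
where the sign changes collapses to `u b u*` because `d` is central and unitary. At a junction
without sign change (`u d · b · u` or `u* · b · d* u*`) the element `d b` (or `b d*`) of `B` is
split into a centered part and a multiple of `1`, which is possible once `φ 1 ≠ 0`; the scalar
part merges two neighbouring powers of `u` into a longer one, still centered since `u` is Haar.
So, by induction from the right, every such product is a combination of alternating products of
centered powers of `u`, `u*` and centered elements of `B`, on which `φ` vanishes by freeness.

If `φ 1 = 0`, then `1` is a centered element of both algebras and can be inserted between any two
letters, so `φ` vanishes on the whole algebra generated by the centered elements.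
-/

section

open Submodule Set Pointwise

variable {A : Type*} [Ring A] [Algebra ℂ A]

/-- `w` is a possibly empty product of `φ`-centered letters taken alternately from `A₁` and `A₂`;
the first letter, if any, lies in `A₁` when `s` and in `A₂` otherwise. -/
inductive IsAltProd (φ : A →ₗ[ℂ] ℂ) (A₁ A₂ : Set A) : Bool → A → Prop
  | nil (s : Bool) : IsAltProd φ A₁ A₂ s 1
  | cons {s : Bool} {x w : A} : x ∈ (if s then A₁ else A₂) → φ x = 0 →
      IsAltProd φ A₁ A₂ (!s) w → IsAltProd φ A₁ A₂ s (x * w)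

section IsAltProd

variable {φ : A →ₗ[ℂ] ℂ} {A₁ A₂ : Set A}

theorem exists_isAltProd_of_ofFn {k : ℕ} (x : Fin (k + 1) → A) (f : Fin (k + 1) → Bool)
    (hx : ∀ i, x i ∈ (if f i then A₁ else A₂)) (hφ : ∀ i, φ (x i) = 0)
    (halt : ∀ i : Fin k, f i.castSucc ≠ f i.succ) :
    ∃ w, IsAltProd φ A₁ A₂ (!f 0) w ∧ (List.ofFn x).prod = x 0 * w := by
  induction k with
  | zero => exact ⟨1, .nil _, by simp⟩
  | succ k ih =>
    obtain ⟨w, hw, hprod⟩ := ih (fun i => x i.succ) (fun i => f i.succ) (fun i => hx _)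
      (fun i => hφ _) (fun i => by rw [Fin.succ_castSucc]; exact halt i.succ)
    have hf : f (0 : Fin (k + 1)).succ = !f 0 := Bool.eq_not_iff.2 (halt 0).symm
    refine ⟨_, ?_, by rw [List.ofFn_succ, List.prod_cons]⟩
    rw [hprod, ← hf]
    exact .cons (hx _) (hφ _) hw

theorem IsAltProd.map_prod_mul_eq_zero (hfree : IsFreePair φ A₁ A₂) {s : Bool} {w : A}
    (hw : IsAltProd φ A₁ A₂ s w) {k : ℕ} (x : Fin (k + 1) → A) (f : Fin (k + 1) → Bool)
    (hx : ∀ i, x i ∈ (if f i then A₁ else A₂)) (hφ : ∀ i, φ (x i) = 0)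
    (halt : ∀ i : Fin k, f i.castSucc ≠ f i.succ) (hlast : f (Fin.last k) ≠ s) :
    φ ((List.ofFn x).prod * w) = 0 := by
  induction hw generalizing k with
  | nil => simpa using hfree k x f hx hφ halt
  | @cons s y w hy hφy _ ih =>
    have := ih (Fin.snoc x y) (Fin.snoc f s) (Fin.lastCases (by simpa) (by simpa))
      (Fin.lastCases (by simpa) (by simpa)) (Fin.lastCases (by simpa using hlast)
        (fun i => by rw [Fin.succ_castSucc i, Fin.snoc_castSucc, Fin.snoc_castSucc]; exact halt i))
      (by simp)
    rw [List.ofFn_succ' (Fin.snoc x y)] at this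
    simpa only [Fin.snoc_castSucc, Fin.snoc_last, List.concat_eq_append,
      List.prod_append, List.prod_singleton, mul_assoc] using this

theorem isFreePair_iff : IsFreePair φ A₁ A₂ ↔ ∀ (s : Bool) (x w : A),
    x ∈ (if s then A₁ else A₂) → φ x = 0 → IsAltProd φ A₁ A₂ (!s) w → φ (x * w) = 0 := by
  refine ⟨fun hfree s x w hx hφx hw => ?_, fun h k x f hx hφ halt => ?_⟩
  · simpa using hw.map_prod_mul_eq_zero hfree (fun _ : Fin 1 => x) (fun _ => s)
      (fun _ => hx) (fun _ => hφx) (fun i => i.elim0) (by simp)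
  · obtain ⟨w, hw, hprod⟩ := exists_isAltProd_of_ofFn x f hx hφ halt
    rw [hprod]
    exact h _ _ _ (hx 0) (hφ 0) hw

end IsAltProd

section UnitCentered

variable {φ : A →ₗ[ℂ] ℂ} {A₁ A₂ : Set A}

theorem IsAltProd.not (h₁ : (1 : A) ∈ A₁) (h₂ : (1 : A) ∈ A₂) (hφ1 : φ 1 = 0) {s : Bool}
    {w : A} (hw : IsAltProd φ A₁ A₂ s w) : IsAltProd φ A₁ A₂ (!s) w := by
  simpa using IsAltProd.cons (s := !s) (x := 1) (by cases s <;> assumption) hφ1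
    (by simpa using hw)

theorem IsFreePair.map_eq_zero_of_mem_adjoin (hfree : IsFreePair φ A₁ A₂) (hφ1 : φ 1 = 0)
    (h₁ : (1 : A) ∈ A₁) (h₂ : (1 : A) ∈ A₂) {x : A}
    (hx : x ∈ Algebra.adjoin ℂ ({a ∈ A₁ | φ a = 0} ∪ {b ∈ A₂ | φ b = 0})) : φ x = 0 := by
  have hword : ∀ y ∈ Submonoid.closure ({a ∈ A₁ | φ a = 0} ∪ {b ∈ A₂ | φ b = 0}),
      IsAltProd φ A₁ A₂ true y := by
    intro y hy
    induction hy using Submonoid.closure_induction_left with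
    | one => exact .nil _
    | mul_left a ha y _ ih =>
      rcases ha with ⟨ha, hφa⟩ | ⟨ha, hφa⟩
      · exact .cons ha hφa (ih.not h₁ h₂ hφ1)
      · exact (IsAltProd.cons (s := false) ha hφa ih).not h₁ h₂ hφ1
  have hvanish : ∀ y, IsAltProd φ A₁ A₂ true y → φ y = 0 := by
    rintro y (_ | ⟨ha, hφa, hw⟩)
    · exact hφ1
    · exact isFreePair_iff.1 hfree _ _ _ ha hφa hw
  rw [← Subalgebra.mem_toSubmodule, Algebra.adjoin_eq_span] at hx
  exact (span_le (p := LinearMap.ker φ)).2 (fun y hy => hvanish y (hword y hy)) hx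

end UnitCentered

theorem mul_mem_of_forall_mem_span {G : Set A} {N : Submodule ℂ A} {z y : A}
    (h : ∀ g ∈ G, z * g ∈ N) (hy : y ∈ span ℂ G) : z * y ∈ N :=
  (span_le (p := N.comap (LinearMap.mulLeft ℂ z))).2 h hy

def altSpan (φ : A →ₗ[ℂ] ℂ) (A₁ A₂ : Set A) (s : Bool) (S : Set A) : Submodule ℂ A :=
  span ℂ (S * {w | IsAltProd φ A₁ A₂ (!s) w})

section altSpan

variable {φ : A →ₗ[ℂ] ℂ} {A₁ A₂ : Set A} {s : Bool} {S S' : Set A}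

theorem mul_mem_altSpan {x w : A} (hx : x ∈ S) (hw : IsAltProd φ A₁ A₂ (!s) w) :
    x * w ∈ altSpan φ A₁ A₂ s S :=
  subset_span (mul_mem_mul hx hw)

theorem IsFreePair.altSpan_le_ker (hfree : IsFreePair φ A₁ A₂)
    (hS : ∀ x ∈ S, x ∈ (if s then A₁ else A₂) ∧ φ x = 0) :
    altSpan φ A₁ A₂ s S ≤ LinearMap.ker φ := by
  refine span_le.2 ?_
  rintro _ ⟨x, hx, w, hw, rfl⟩
  exact isFreePair_iff.1 hfree s x w (hS x hx).1 (hS x hx).2 hw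

theorem mul_mem_altSpan_of_mul_mem {z y : A} (hz : ∀ x ∈ S, z * x ∈ S')
    (hy : y ∈ altSpan φ A₁ A₂ s S) : z * y ∈ altSpan φ A₁ A₂ s S' := by
  refine mul_mem_of_forall_mem_span ?_ hy
  rintro _ ⟨x, hx, w, hw, rfl⟩
  rw [← mul_assoc]
  exact mul_mem_altSpan (hz x hx) hw

theorem mul_mem_altSpan_not (hS : ∀ x ∈ S, x ∈ (if s then A₁ else A₂) ∧ φ x = 0) {z y : A}
    (hz : z ∈ S') (hy : y ∈ altSpan φ A₁ A₂ s S) : z * y ∈ altSpan φ A₁ A₂ (!s) S' := by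
  refine mul_mem_of_forall_mem_span ?_ hy
  rintro _ ⟨x, hx, w, hw, rfl⟩
  exact mul_mem_altSpan hz (by simpa using IsAltProd.cons (hS x hx).1 (hS x hx).2 hw)

end altSpan

abbrev powAltSpan (φ : A →ₗ[ℂ] ℂ) (A₁ A₂ : Set A) (g : A) : Submodule ℂ A :=
  altSpan φ A₁ A₂ true (range fun m : ℕ => g ^ (m + 1))

abbrev secondAltSpan (φ : A →ₗ[ℂ] ℂ) (A₁ A₂ : Set A) : Submodule ℂ A :=
  altSpan φ A₁ A₂ false {x | x ∈ A₂ ∧ φ x = 0}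

abbrev tailSpan (φ : A →ₗ[ℂ] ℂ) (A₁ A₂ : Set A) (g : A) : Submodule ℂ A :=
  ℂ ∙ 1 ⊔ secondAltSpan φ A₁ A₂ ⊔ powAltSpan φ A₁ A₂ g

section powAltSpan

variable {φ : A →ₗ[ℂ] ℂ} {A₁ A₂ : Set A} {g : A}

theorem mem_secondAltSpan {b : A} (hb : b ∈ A₂) (hφb : φ b = 0) :
    b ∈ secondAltSpan φ A₁ A₂ := by
  simpa using mul_mem_altSpan (s := false) (S := {x | x ∈ A₂ ∧ φ x = 0}) ⟨hb, hφb⟩ (.nil _)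

theorem mul_mem_secondAltSpan (hg : ∀ m : ℕ, g ^ (m + 1) ∈ A₁ ∧ φ (g ^ (m + 1)) = 0) {b y : A}
    (hb : b ∈ A₂) (hφb : φ b = 0) (hy : y ∈ powAltSpan φ A₁ A₂ g) :
    b * y ∈ secondAltSpan φ A₁ A₂ :=
  mul_mem_altSpan_not (s := true) (S' := {x | x ∈ A₂ ∧ φ x = 0})
    (by rintro _ ⟨m, rfl⟩; exact hg m) ⟨hb, hφb⟩ hy

theorem mul_mem_powAltSpan {y : A} (hy : y ∈ tailSpan φ A₁ A₂ g) :
    g * y ∈ powAltSpan φ A₁ A₂ g := by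
  have hg : g ∈ range fun m : ℕ => g ^ (m + 1) := ⟨0, pow_one g⟩
  suffices tailSpan φ A₁ A₂ g ≤ (powAltSpan φ A₁ A₂ g).comap (LinearMap.mulLeft ℂ g) from this hy
  refine sup_le (sup_le ?_ fun y hy => ?_) fun y hy => ?_
  · simpa using mul_mem_altSpan (φ := φ) (A₁ := A₁) (A₂ := A₂) hg (.nil _)
  · exact mul_mem_altSpan_not (s := false) (fun x hx => hx) hg hy
  · exact mul_mem_altSpan_of_mul_mem (by rintro _ ⟨m, rfl⟩; exact ⟨m + 1, pow_succ' g _⟩) hy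

theorem IsFreePair.secondAltSpan_le_ker (hfree : IsFreePair φ A₁ A₂) :
    secondAltSpan φ A₁ A₂ ≤ LinearMap.ker φ :=
  hfree.altSpan_le_ker fun _ hx => hx

theorem IsFreePair.powAltSpan_le_ker (hfree : IsFreePair φ A₁ A₂)
    (hg : ∀ m : ℕ, g ^ (m + 1) ∈ A₁ ∧ φ (g ^ (m + 1)) = 0) :
    powAltSpan φ A₁ A₂ g ≤ LinearMap.ker φ :=
  hfree.altSpan_le_ker (by rintro _ ⟨m, rfl⟩; exact hg m)

theorem secondAltSpan_sup_le_tailSpan :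
    secondAltSpan φ A₁ A₂ ⊔ powAltSpan φ A₁ A₂ g ≤ tailSpan φ A₁ A₂ g :=
  sup_le_sup_right le_sup_right _

theorem mem_sup_secondAltSpan_of_sub_smul_one {x : A} {c : ℂ} (hx : x - c • 1 ∈ A₂)
    (hφx : φ (x - c • 1) = 0) : x ∈ ℂ ∙ 1 ⊔ secondAltSpan φ A₁ A₂ := by
  rw [← sub_add_cancel x (c • 1), add_comm]
  exact add_mem (mem_sup_left (smul_mem _ _ (mem_span_singleton_self 1)))
    (mem_sup_right (mem_secondAltSpan hx hφx))

theorem mul_mem_sup_of_sub_smul_one (hg : ∀ m : ℕ, g ^ (m + 1) ∈ A₁ ∧ φ (g ^ (m + 1)) = 0)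
    {x y : A} {c : ℂ} (hx : x - c • 1 ∈ A₂) (hφx : φ (x - c • 1) = 0)
    (hy : y ∈ powAltSpan φ A₁ A₂ g) :
    x * y ∈ secondAltSpan φ A₁ A₂ ⊔ powAltSpan φ A₁ A₂ g := by
  have hxy : x * y = (x - c • 1) * y + c • y := by
    rw [sub_mul, smul_mul_assoc, one_mul, sub_add_cancel]
  rw [hxy]
  exact add_mem (mem_sup_left (mul_mem_secondAltSpan hg hx hφx hy))
    (mem_sup_right (smul_mem _ _ hy))

theorem pow_mul_mul_mem_powAltSpan (hg : ∀ m : ℕ, g ^ (m + 1) ∈ A₁ ∧ φ (g ^ (m + 1)) = 0)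
    {e y : A} (he : e ∈ A₂) (hφe : φ e = 0) (hy : y ∈ tailSpan φ A₁ A₂ g) (n : ℕ) :
    (g * e) ^ n * (g * y) ∈ powAltSpan φ A₁ A₂ g := by
  induction n with
  | zero => simpa using mul_mem_powAltSpan hy
  | succ n ih =>
    rw [pow_succ', mul_assoc, mul_assoc]
    exact mul_mem_powAltSpan (mem_sup_left (mem_sup_right (mul_mem_secondAltSpan hg he hφe ih)))

end powAltSpan

section Unitary

theorem Unitary.coe_zpow_eq_or {R : Type*} [Monoid R] [StarMul R] (V : unitary R)
    (n : ℤ) :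
    ((V ^ n : unitary R) : R) = (V : R) ^ n.natAbs ∨
      ((V ^ n : unitary R) : R) = star (V : R) ^ n.natAbs := by
  obtain ⟨k, rfl | rfl⟩ := Int.eq_nat_or_neg n
  · left
    simp
  · right
    simp [zpow_neg, ← Unitary.star_eq_inv, star_pow]

variable [StarRing A] [StarModule ℂ A]

theorem mem_span_zpow_of_mem_adjoin (V : unitary A) {x : A}
    (hx : x ∈ StarAlgebra.adjoin ℂ {(V : A)}) :
    x ∈ span ℂ (range fun n : ℤ => ((V ^ n : unitary A) : A)) := by
  rw [← StarSubalgebra.mem_toSubalgebra, StarAlgebra.adjoin_toSubalgebra,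
    ← Subalgebra.mem_toSubmodule, Algebra.adjoin_eq_span] at hx
  refine span_mono (fun y hy => ?_) hx
  induction hy using Submonoid.closure_induction with
  | mem y hy =>
    rcases hy with rfl | hy
    · exact ⟨1, by simp⟩
    · rw [Set.mem_star, Set.mem_singleton_iff] at hy
      exact ⟨-1, by simp [← Unitary.star_eq_inv, ← hy]⟩
  | one => exact ⟨0, by simp⟩
  | mul y z _ _ hy hz =>
    obtain ⟨m, rfl⟩ := hy
    obtain ⟨n, rfl⟩ := hz
    exact ⟨m + n, by simp [zpow_add]⟩

theorem mem_span_zpow_ne_zero_of_mem_adjoin {φ : A →ₗ[ℂ] ℂ} (hφ1 : φ 1 ≠ 0) (V : unitary A)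
    (hV : ∀ n : ℤ, n ≠ 0 → φ (V ^ n : unitary A) = 0) {x : A}
    (hx : x ∈ StarAlgebra.adjoin ℂ {(V : A)}) (hφx : φ x = 0) :
    x ∈ span ℂ ((fun n : ℤ => ((V ^ n : unitary A) : A)) '' {n | n ≠ 0}) := by
  have hrange : (range fun n : ℤ => ((V ^ n : unitary A) : A)) ⊆
      insert 1 ((fun n : ℤ => ((V ^ n : unitary A) : A)) '' {n | n ≠ 0}) := by
    rintro _ ⟨n, rfl⟩
    by_cases hn : n = 0
    · simp [hn]
    · exact Or.inr ⟨n, hn, rfl⟩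
  obtain ⟨a, z, hz, rfl⟩ := mem_span_insert.1 (span_mono hrange (mem_span_zpow_of_mem_adjoin V hx))
  have hφz : φ z = 0 :=
    (span_le (p := LinearMap.ker φ)).2 (by rintro _ ⟨n, hn, rfl⟩; exact hV n hn) hz
  rw [map_add, map_smul, hφz, add_zero, smul_eq_mul, mul_eq_zero] at hφx
  simpa [hφx.resolve_right hφ1] using hz

end Unitary

section HaarUnitary

variable [StarRing A] {φ : A →ₗ[ℂ] ℂ} {u : A}

theorem IsHaarUnitary.star (hu : IsHaarUnitary φ u) : IsHaarUnitary φ (star u) :=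
  ⟨by simpa using hu.2.1, by simpa using hu.1, fun n hn => by simpa using (hu.2.2 n hn).symm⟩

theorem IsHaarUnitary.pow_succ_mem [StarModule ℂ A] (hu : IsHaarUnitary φ u)
    {A₁ : StarSubalgebra ℂ A} (hu₁ : u ∈ A₁) (m : ℕ) :
    u ^ (m + 1) ∈ (A₁ : Set A) ∧ φ (u ^ (m + 1)) = 0 :=
  ⟨pow_mem hu₁ _, (hu.2.2 (m + 1) (by omega)).1⟩

end HaarUnitary

/-- The second summand receives `(u d)⁻ⁿ t = d* ((u* d*)ⁿ⁻¹ (u* t))`: the leading `d*` is kept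
outside, to be cancelled by the `d` of a preceding `u d` at a junction `u d b d* u*`. -/
def udSpan [StarRing A] (φ : A →ₗ[ℂ] ℂ) (A₁ A₂ : Set A) (u d : A) : Submodule ℂ A :=
  powAltSpan φ A₁ A₂ u ⊔ (powAltSpan φ A₁ A₂ (star u)).map (LinearMap.mulLeft ℂ (star d))

section udSpan

variable [StarRing A] [StarModule ℂ A] {φ : A →ₗ[ℂ] ℂ} {A₁ B : StarSubalgebra ℂ A} {u d : A}

theorem IsFreePair.udSpan_le_ker (hfree : IsFreePair φ A₁ B) (hu : IsHaarUnitary φ u)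
    (hu₁ : u ∈ A₁) (hdB : d ∈ B) (hφds : φ (star d) = 0) :
    udSpan φ A₁ B u d ≤ LinearMap.ker φ := by
  refine sup_le (hfree.powAltSpan_le_ker (hu.pow_succ_mem hu₁))
    (map_le_iff_le_comap.2 fun v hv => hfree.secondAltSpan_le_ker ?_)
  exact mul_mem_secondAltSpan (hu.star.pow_succ_mem (star_mem hu₁)) (star_mem hdB) hφds hv

theorem pow_mul_mem_udSpan (hu : IsHaarUnitary φ u) (hu₁ : u ∈ A₁) (hdB : d ∈ B)
    (hφd : φ d = 0) (hφds : φ (star d) = 0) {t : A} (ht : t ∈ tailSpan φ A₁ B (star u))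
    (hdt : d * t ∈ tailSpan φ A₁ B u) (n : ℕ) :
    (u * d) ^ (n + 1) * t ∈ udSpan φ A₁ B u d ∧
      star (u * d) ^ (n + 1) * t ∈ udSpan φ A₁ B u d := by
  refine ⟨mem_sup_left ?_, mem_sup_right ⟨(star u * star d) ^ n * (star u * t), ?_, ?_⟩⟩
  · rw [pow_succ, mul_assoc, mul_assoc]
    exact pow_mul_mul_mem_powAltSpan (hu.pow_succ_mem hu₁) hdB hφd hdt n
  · exact pow_mul_mul_mem_powAltSpan (hu.star.pow_succ_mem (star_mem hu₁)) (star_mem hdB) hφds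
      ht n
  · rw [LinearMap.mulLeft_apply, star_mul, pow_succ, ← mul_assoc, ← mul_assoc, ← mul_pow_mul,
      mul_assoc _ (star d)]

theorem mul_mem_tailSpan (hφ1 : φ 1 ≠ 0) (hu : IsHaarUnitary φ u) (hu₁ : u ∈ A₁) (hdB : d ∈ B)
    (hd : d * star d = 1) (hcen : ∀ x ∈ B, d * x = x * d) {b w : A}
    (hb : b ∈ B) (hφb : φ b = 0) (hw : w ∈ ℂ ∙ 1 ⊔ udSpan φ A₁ B u d) :
    b * w ∈ secondAltSpan φ A₁ B ⊔ powAltSpan φ A₁ B (star u) ∧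
      d * (b * w) ∈ tailSpan φ A₁ B u := by
  have hcenter (x : A) (hx : x ∈ B) : x - (φ x / φ 1) • 1 ∈ B ∧ φ (x - (φ x / φ 1) • 1) = 0 :=
    ⟨sub_mem hx (B.smul_mem (one_mem B) _), by simp [div_mul_cancel₀ _ hφ1]⟩
  have hpow := hu.pow_succ_mem hu₁
  have hpows := hu.star.pow_succ_mem (star_mem hu₁)
  have hdbd : d * b * star d = b := by rw [hcen b hb, mul_assoc, hd, mul_one]
  constructor
  · suffices ℂ ∙ 1 ⊔ udSpan φ A₁ B u d ≤ (secondAltSpan φ A₁ B ⊔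
        powAltSpan φ A₁ B (star u)).comap (LinearMap.mulLeft ℂ b) from this hw
    refine sup_le ?_ (sup_le (fun v hv => ?_) (map_le_iff_le_comap.2 fun v hv => ?_))
    · simpa using mem_sup_left (mem_secondAltSpan hb hφb)
    · exact mem_sup_left (mul_mem_secondAltSpan hpow hb hφb hv)
    · have hbd := hcenter _ (mul_mem hb (star_mem hdB))
      simpa [mul_assoc] using mul_mem_sup_of_sub_smul_one hpows hbd.1 hbd.2 hv
  · suffices ℂ ∙ 1 ⊔ udSpan φ A₁ B u d ≤
        (tailSpan φ A₁ B u).comap (LinearMap.mulLeft ℂ (d * b)) by simpa [mul_assoc] using this hw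
    have hdb := hcenter _ (mul_mem hdB hb)
    refine sup_le ?_ (sup_le (fun v hv => ?_) (map_le_iff_le_comap.2 fun v hv => ?_))
    · simpa using mem_sup_left (mem_sup_secondAltSpan_of_sub_smul_one hdb.1 hdb.2)
    · exact secondAltSpan_sup_le_tailSpan (mul_mem_sup_of_sub_smul_one hpow hdb.1 hdb.2 hv)
    · rw [mem_comap, mem_comap, LinearMap.mulLeft_apply, LinearMap.mulLeft_apply, ← mul_assoc,
        hdbd]
      exact mem_sup_left (mem_sup_right (mul_mem_secondAltSpan hpows hb hφb hv))

theorem mul_mem_udSpan_of_mem_adjoin (hφ1 : φ 1 ≠ 0) (hu : IsHaarUnitary φ u) (hu₁ : u ∈ A₁)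
    (hdB : d ∈ B) (hφd : φ d = 0) (hφds : φ (star d) = 0) (hud : IsHaarUnitary φ (u * d))
    {y t : A} (hy : y ∈ StarAlgebra.adjoin ℂ {u * d}) (hφy : φ y = 0)
    (ht : t ∈ tailSpan φ A₁ B (star u)) (hdt : d * t ∈ tailSpan φ A₁ B u) :
    y * t ∈ udSpan φ A₁ B u d := by
  let V : unitary A := ⟨u * d, Unitary.mem_iff.2 ⟨hud.1, hud.2.1⟩⟩
  have hV (n : ℤ) (hn : n ≠ 0) : φ (V ^ n : unitary A) = 0 := by
    have hpos : 1 ≤ n.natAbs := Int.natAbs_pos.2 hn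
    rcases Unitary.coe_zpow_eq_or V n with h | h <;> rw [h]
    exacts [(hud.2.2 _ hpos).1, (hud.2.2 _ hpos).2]
  refine (span_le (p := (udSpan φ A₁ B u d).comap (LinearMap.mulRight ℂ t))).2 ?_
    (mem_span_zpow_ne_zero_of_mem_adjoin hφ1 V hV hy hφy)
  rintro _ ⟨n, hn, rfl⟩
  obtain ⟨k, hk⟩ : ∃ k, n.natAbs = k + 1 := Nat.exists_eq_add_one.2 (Int.natAbs_pos.2 hn)
  have hpow := pow_mul_mem_udSpan hu hu₁ hdB hφd hφds ht hdt k
  rcases Unitary.coe_zpow_eq_or V n with h | h <;>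
    simp only [h, hk]
  exacts [hpow.1, hpow.2]

theorem IsAltProd.mem_udSpan_tailSpan (hφ1 : φ 1 ≠ 0) (hu : IsHaarUnitary φ u) (hu₁ : u ∈ A₁)
    (hdB : d ∈ B) (hφd : φ d = 0) (hφds : φ (star d) = 0) (hd : d * star d = 1)
    (hcen : ∀ x ∈ B, d * x = x * d) (hud : IsHaarUnitary φ (u * d)) {s : Bool} {w : A}
    (hw : IsAltProd φ (StarAlgebra.adjoin ℂ {u * d}) B s w) :
    (s = true → w ∈ ℂ ∙ 1 ⊔ udSpan φ A₁ B u d) ∧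
      (s = false → w ∈ tailSpan φ A₁ B (star u) ∧ d * w ∈ tailSpan φ A₁ B u) := by
  induction hw with
  | nil =>
    exact ⟨fun _ => mem_sup_left (mem_span_singleton_self 1), fun _ =>
      ⟨mem_sup_left (mem_sup_left (mem_span_singleton_self 1)),
        by simpa using mem_sup_left (mem_sup_right (mem_secondAltSpan hdB hφd))⟩⟩
  | @cons s x w hx hφx _ ih =>
    cases s
    · have h := mul_mem_tailSpan hφ1 hu hu₁ hdB hd hcen hx hφx (ih.1 rfl)
      exact ⟨nofun, fun _ => ⟨secondAltSpan_sup_le_tailSpan h.1, h.2⟩⟩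
    · exact ⟨fun _ => mem_sup_right (mul_mem_udSpan_of_mem_adjoin hφ1 hu hu₁ hdB hφd hφds hud
        hx hφx (ih.2 rfl).1 (ih.2 rfl).2), nofun⟩

end udSpan

section Main

variable [StarRing A] [StarModule ℂ A] {φ : A →ₗ[ℂ] ℂ} {A₁ B : StarSubalgebra ℂ A} {u d : A}

theorem isHaarUnitary_mul (hfree : IsFreePair φ A₁ B) (hu : IsHaarUnitary φ u) (hu₁ : u ∈ A₁)
    (hdB : d ∈ B) (hφd : φ d = 0) (hφds : φ (star d) = 0)
    (hd : star d * d = 1 ∧ d * star d = 1) : IsHaarUnitary φ (u * d) := by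
  have ht : (1 : A) ∈ tailSpan φ A₁ B (star u) :=
    mem_sup_left (mem_sup_left (mem_span_singleton_self 1))
  have hdt : d * 1 ∈ tailSpan φ A₁ B u := by
    simpa using mem_sup_left (mem_sup_right (mem_secondAltSpan hdB hφd))
  refine ⟨?_, ?_, fun n hn => ?_⟩
  · rw [star_mul, mul_assoc, ← mul_assoc (star u), hu.1, one_mul, hd.1]
  · rw [star_mul, mul_assoc, ← mul_assoc d, hd.2, one_mul, hu.2.1]
  · obtain ⟨k, rfl⟩ := Nat.exists_eq_add_one.2 hn
    have h := pow_mul_mem_udSpan hu hu₁ hdB hφd hφds ht hdt k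
    simp only [mul_one] at h
    exact ⟨hfree.udSpan_le_ker hu hu₁ hdB hφds h.1, hfree.udSpan_le_ker hu hu₁ hdB hφds h.2⟩

theorem IsFreePair.adjoin_mul (hfree : IsFreePair φ A₁ B) (hφ1 : φ 1 ≠ 0)
    (hu : IsHaarUnitary φ u) (hu₁ : u ∈ A₁) (hdB : d ∈ B) (hφd : φ d = 0)
    (hφds : φ (star d) = 0) (hd : d * star d = 1) (hcen : ∀ x ∈ B, d * x = x * d)
    (hud : IsHaarUnitary φ (u * d)) :
    IsFreePair φ (StarAlgebra.adjoin ℂ {u * d} : Set A) B := by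
  refine isFreePair_iff.2 fun s x w hx hφx hw => ?_
  have hw' := hw.mem_udSpan_tailSpan hφ1 hu hu₁ hdB hφd hφds hd hcen hud (A₁ := A₁)
  cases s
  · have h := (mul_mem_tailSpan hφ1 hu hu₁ hdB hd hcen hx hφx (hw'.1 rfl)).1
    exact sup_le hfree.secondAltSpan_le_ker
      (hfree.powAltSpan_le_ker (hu.star.pow_succ_mem (star_mem hu₁))) h
  · exact hfree.udSpan_le_ker hu hu₁ hdB hφds
      (mul_mem_udSpan_of_mem_adjoin hφ1 hu hu₁ hdB hφd hφds hud hx hφx (hw'.2 rfl).1 (hw'.2 rfl).2)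

theorem IsFreePair.adjoin_mul_of_map_one_eq_zero (hfree : IsFreePair φ A₁ B) (hφ1 : φ 1 = 0)
    (hu₁ : u ∈ A₁) (hφu : φ u = 0) (hφus : φ (star u) = 0) (hdB : d ∈ B) (hφd : φ d = 0)
    (hφds : φ (star d) = 0) : IsFreePair φ (StarAlgebra.adjoin ℂ {u * d} : Set A) B := by
  set G := Algebra.adjoin ℂ ({a ∈ (A₁ : Set A) | φ a = 0} ∪ {b ∈ (B : Set A) | φ b = 0})
  have hG {x : A} (hx : x ∈ A₁ ∧ φ x = 0 ∨ x ∈ B ∧ φ x = 0) : x ∈ G :=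
    Algebra.subset_adjoin hx
  have hC : (StarAlgebra.adjoin ℂ {u * d}).toSubalgebra ≤ G := by
    rw [StarAlgebra.adjoin_toSubalgebra, Algebra.adjoin_le_iff]
    rintro x (rfl | h)
    · exact mul_mem (hG (.inl ⟨hu₁, hφu⟩)) (hG (.inr ⟨hdB, hφd⟩))
    · rw [Set.mem_star, Set.mem_singleton_iff] at h
      rw [← star_star x, h, star_mul]
      exact mul_mem (hG (.inr ⟨star_mem hdB, hφds⟩)) (hG (.inl ⟨star_mem hu₁, hφus⟩))
  intro k x f hx hφx _
  refine hfree.map_eq_zero_of_mem_adjoin hφ1 (one_mem A₁) (one_mem B)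
    (Subalgebra.list_prod_mem _ fun z hz => ?_)
  obtain ⟨i, rfl⟩ := List.mem_ofFn.1 hz
  have hxi := hx i
  cases hfi : f i <;> rw [hfi] at hxi
  · exact hG (.inr ⟨hxi, hφx i⟩)
  · exact hC hxi

end Main

end

/-- Lemma: if `d` is a centered unitary in the center of a unital *-subalgebra `B` and
`u` is a Haar unitary which is *-free from `B`, then `ud` is a Haar unitary which is
*-free from `B`. -/
theorem stmt_9 {A : Type*} [Ring A] [StarRing A] [Algebra ℂ A] [StarModule ℂ A]
    (φ : A →ₗ[ℂ] ℂ) (B : StarSubalgebra ℂ A)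
    (d : A) (hdB : d ∈ B)
    (hd_unitary : star d * d = 1 ∧ d * star d = 1)
    (hd_central : ∀ x ∈ B, d * x = x * d)
    (hφd : φ d = 0) (hφds : φ (star d) = 0)
    (u : A) (hu : IsHaarUnitary φ u)
    (hufree : IsFreePair φ
      ((StarAlgebra.adjoin ℂ {u} : StarSubalgebra ℂ A) : Set A) (B : Set A)) :
    IsHaarUnitary φ (u * d) ∧
    IsFreePair φ
      ((StarAlgebra.adjoin ℂ {u * d} : StarSubalgebra ℂ A) : Set A) (B : Set A) := by
  have hu₁ : u ∈ StarAlgebra.adjoin ℂ {u} := StarAlgebra.self_mem_adjoin_singleton ℂ u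
  have hud := isHaarUnitary_mul hufree hu hu₁ hdB hφd hφds hd_unitary
  refine ⟨hud, ?_⟩
  by_cases hφ1 : φ 1 = 0
  · have hφu := hu.2.2 1 le_rfl
    simp only [pow_one] at hφu
    exact hufree.adjoin_mul_of_map_one_eq_zero hφ1 hu₁ hφu.1 hφu.2 hdB hφd hφds
  · exact hufree.adjoin_mul hφ1 hu hu₁ hdB hφd hφds hd_unitary.2 hd_central hud

end
end

section
/- Let A be a unital complex *-algebra with a linear functional φ : A → ℂ, let B ⊆ A be a unital *-subalgebra, let d ∈ B be a unitary in the center of B with φ(d) = φ(d*) = 0, and let u ∈ A be a Haar unitary which is *-free from B with respect to φ. Then for every integer n ≠ 0, φ((ud)^n) = 0; equivalently, ud is a unitary with φ((ud)^n) = φ(((ud)*)^n) = 0 for all n ≥ 1. -/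
/-!
Both `(ud)ⁿ = u d u d ⋯ u d` and `((ud)*)ⁿ = d* u* d* u* ⋯ d* u*` are alternating words in
centered elements of the two free algebras (`φ(u) = φ(u*) = 0` because `u` is Haar), so freeness
kills their moments, while `ud` is unitary as a product of unitaries.
-/

noncomputable section

theorem List.prod_ofFn_alternating {M : Type*} [Monoid M] (a b : M) (n : ℕ) :
    (List.ofFn fun i : Fin (2 * n) => if Even (i : ℕ) then a else b).prod = (a * b) ^ n := by
  induction n with
  | zero => simp
  | succ n ih =>
    rw [show 2 * (n + 1) = 2 * n + 1 + 1 by ring, List.ofFn_succ', List.ofFn_succ',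
      List.concat_eq_append, List.concat_eq_append, List.prod_append, List.prod_append]
    simp [ih, pow_succ, mul_assoc]

namespace IsFreePair

variable {A : Type*} [Ring A] [Algebra ℂ A] {φ : A →ₗ[ℂ] ℂ} {S₁ S₂ : Set A}

theorem symm (h : IsFreePair φ S₁ S₂) : IsFreePair φ S₂ S₁ := by
  intro k x f hmem hcent halt
  refine h k x (fun i => !f i) (fun i => ?_) hcent (fun i => ?_)
  · simpa [apply_ite (x i ∈ ·)] using hmem i
  · simpa using halt i

theorem map_mul_pow_succ_eq_zero (h : IsFreePair φ S₁ S₂) {a b : A} (ha : a ∈ S₁)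
    (hb : b ∈ S₂) (hφa : φ a = 0) (hφb : φ b = 0) (n : ℕ) :
    φ ((a * b) ^ (n + 1)) = 0 := by
  rw [← List.prod_ofFn_alternating]
  refine h (2 * n + 1) _ (fun i => decide (Even (i : ℕ))) (fun i => ?_) (fun i => ?_)
    (fun i => ?_)
  · by_cases hi : Even (i : ℕ) <;> simp [hi, ha, hb]
  · by_cases hi : Even (i : ℕ) <;> simp [hi, hφa, hφb]
  · simp [Nat.even_add_one, -Nat.not_even_iff_odd]

end IsFreePair

theorem stmt_10_general {A : Type*} [Ring A] [StarRing A] [Algebra ℂ A] [StarModule ℂ A]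
    (φ : A →ₗ[ℂ] ℂ) (B : StarSubalgebra ℂ A)
    (d : A) (hdB : d ∈ B)
    (hd_unitary : star d * d = 1 ∧ d * star d = 1)
    (hφd : φ d = 0) (hφds : φ (star d) = 0)
    (u : A) (hu : IsHaarUnitary φ u)
    (hufree : IsFreePair φ
      ((StarAlgebra.adjoin ℂ {u} : StarSubalgebra ℂ A) : Set A) (B : Set A)) :
    IsHaarUnitary φ (u * d) := by
  obtain ⟨huu, huu', hu_moments⟩ := hu
  have huA : u ∈ StarAlgebra.adjoin ℂ {u} := StarAlgebra.subset_adjoin ℂ {u} rfl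
  have hφu : φ u = 0 := by simpa using (hu_moments 1 le_rfl).1
  have hφus : φ (star u) = 0 := by simpa using (hu_moments 1 le_rfl).2
  obtain ⟨hud, hud'⟩ := Unitary.mem_iff.mp <|
    mul_mem (Unitary.mem_iff.mpr ⟨huu, huu'⟩) (Unitary.mem_iff.mpr hd_unitary)
  refine ⟨hud, hud', fun n hn => ?_⟩
  obtain ⟨m, rfl⟩ := Nat.exists_eq_add_of_le' hn
  refine ⟨hufree.map_mul_pow_succ_eq_zero huA hdB hφu hφd m, ?_⟩
  rw [star_mul]
  exact hufree.symm.map_mul_pow_succ_eq_zero (star_mem hdB) (star_mem huA) hφds hφus m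

/-- If `d` is a centered unitary in the center of a unital *-subalgebra `B` and
`u` is a Haar unitary which is *-free from `B`, then `ud` is again a Haar
unitary: `φ((ud)ⁿ) = φ(((ud)*)ⁿ) = 0` for all `n ≥ 1` (equivalently,
`φ((ud)ⁿ) = 0` for all integers `n ≠ 0`). -/
theorem stmt_10 {A : Type*} [Ring A] [StarRing A] [Algebra ℂ A] [StarModule ℂ A]
    (φ : A →ₗ[ℂ] ℂ) (B : StarSubalgebra ℂ A)
    (d : A) (hdB : d ∈ B)
    (hd_unitary : star d * d = 1 ∧ d * star d = 1)
    (hd_central : ∀ x ∈ B, d * x = x * d)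
    (hφd : φ d = 0) (hφds : φ (star d) = 0)
    (u : A) (hu : IsHaarUnitary φ u)
    (hufree : IsFreePair φ
      ((StarAlgebra.adjoin ℂ {u} : StarSubalgebra ℂ A) : Set A) (B : Set A)) :
    IsHaarUnitary φ (u * d) :=
  stmt_10_general φ B d hdB hd_unitary hφd hφds u hu hufree

end
end
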